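/- arXiv:0911.3389 — 2 statements merged into one kernel-verified Lean document; each statement's English description precedes it below -/
import Mathlib

section
/- There is a universal constant C > 0 such that for every n ≥ 1, every symmetric matrix A ∈ ℝ^{n×n}, every integer k ≥ 2, and x drawn uniformly at random from {−1,1}^n: E[|xᵀAx − tr(A)|^k] ≤ C^k · max{√k·‖A‖₂, k·λ_max(A)}^k. -/
open MeasureTheory

/-- Interpret a Boolean vector as a `±1` sign vector. -/
def signVec {n : ℕ} (x : Fin n → Bool) : Fin n → ℝ := fun i => if x i then 1 else -1

/-- Expectation of `f` under the uniform distribution on `{-1,1}^n`. -/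
noncomputable def expUnif (n : ℕ) (f : (Fin n → ℝ) → ℝ) : ℝ :=
  (∑ x : Fin n → Bool, f (signVec x)) / 2 ^ n

/-- The Frobenius norm of a real matrix. -/
noncomputable def frobNorm {n : ℕ} (A : Matrix (Fin n) (Fin n) ℝ) : ℝ :=
  Real.sqrt (∑ i, ∑ j, A i j ^ 2)

/-- `μ` is an eigenvalue of `A`. -/
def IsEigenvalue {n : ℕ} (A : Matrix (Fin n) (Fin n) ℝ) (μ : ℝ) : Prop :=
  ∃ v : Fin n → ℝ, v ≠ 0 ∧ A.mulVec v = μ • v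

/-- The largest absolute value of an eigenvalue of `A`. -/
noncomputable def lambdaMax {n : ℕ} (A : Matrix (Fin n) (Fin n) ℝ) : ℝ :=
  sSup {r : ℝ | ∃ μ : ℝ, IsEigenvalue A μ ∧ r = |μ|}


/-!
For `x ∈ {-1, 1}ⁿ` we have `xᵀAx - tr A = Z_A(x) := ∑_{i ≠ j} A i j * x i * x j`. Averaging over a
uniformly random set `δ` of coordinates gives `Z_A(x) = 4 𝔼_δ T_δ(x, x)`, where
`T_δ(x, y) = ∑_{i ∈ δ, j ∉ δ} A i j * x i * y j`. Since `T_δ` reads its first argument only on `δ`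
and its second only off `δ`, `T_δ(x, x)` has the law of the decoupled `T_δ(x, y)` with `y` an
independent copy of `x`. For fixed `x` this is a Rademacher sum in `y` with some coefficient
vector `c`, so Khintchine's inequality bounds its `2m`-th moment by `(2m - 1)‼ ‖c‖^(2m)`.
Finally `‖c‖² ≤ ‖A‖₂² + Z_B(x)` for `B = P A Aᵀ P`, `P` the coordinate projection onto `δ`, and
`B` has Frobenius norm at most `‖A‖ ‖A‖₂` and operator norm at most `‖A‖²`. So the `2m`-th
moment of `Z_A` is controlled by the `m`-th moment of `Z_B`, and strong induction on `m` closes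
with an absolute constant; odd moments follow by Cauchy–Schwarz. For symmetric `A` the operator
norm `‖A‖` is `λ_max(A)`.
-/

open Finset Matrix
-- From here on, `‖A‖` for a matrix `A` is its `ℓ²` operator norm.
open scoped BigOperators Matrix.Norms.L2Operator Nat

def mix {ι α : Type*} (δ : ι → Bool) (x y : ι → α) : ι → α := fun i => if δ i then x i else y i

section Expectation

variable {ι : Type*} [Fintype ι]

theorem pow_expect_le_expect_pow_of_even [Nonempty ι] (f : ι → ℝ) {p : ℕ} (hp : Even p) :
    (𝔼 i, f i) ^ p ≤ 𝔼 i, f i ^ p := by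
  have hcard : (0 : ℝ) < Fintype.card ι := by exact_mod_cast Fintype.card_pos
  simp only [Fintype.expect_eq_sum_div_card, div_eq_inv_mul, mul_sum]
  exact Real.pow_arith_mean_le_arith_mean_pow_of_even univ (fun _ => _) f
    (fun _ _ => by positivity)
    (by rw [sum_const, card_univ, nsmul_eq_mul, mul_inv_cancel₀ hcard.ne']) hp

theorem expect_abs_pow_le_of_even_moments (f : ι → ℝ) {a : ℝ} (ha : 0 ≤ a) {p : ℕ}
    (h : ∀ m, 2 * m ≤ p + 1 → 𝔼 i, f i ^ (2 * m) ≤ a ^ (2 * m)) :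
    𝔼 i, |f i| ^ p ≤ a ^ p := by
  have habs : ∀ m i, |f i| ^ (2 * m) = f i ^ (2 * m) := fun m i => (even_two_mul m).pow_abs _
  obtain ⟨u, rfl | rfl⟩ := Nat.even_or_odd' p
  · simpa only [habs] using h u (by omega)
  have hsq : ∀ m i, (|f i| ^ m) ^ 2 = f i ^ (2 * m) := fun m i => by rw [← pow_mul', habs]
  have hcs : (𝔼 i, |f i| ^ (2 * u + 1)) ^ 2 ≤ (a ^ (2 * u + 1)) ^ 2 :=
    calc (𝔼 i, |f i| ^ (2 * u + 1)) ^ 2 = (𝔼 i, |f i| ^ u * |f i| ^ (u + 1)) ^ 2 := by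
          simp only [← pow_add]; ring_nf
      _ ≤ (𝔼 i, f i ^ (2 * u)) * 𝔼 i, f i ^ (2 * (u + 1)) := by
          simpa only [hsq] using expect_mul_sq_le_sq_mul_sq univ (|f ·| ^ u) (|f ·| ^ (u + 1))
      _ ≤ a ^ (2 * u) * a ^ (2 * (u + 1)) :=
          mul_le_mul (h u (by omega)) (h (u + 1) (by omega))
            (expect_nonneg fun i _ => by rw [← hsq]; positivity) (by positivity)
      _ = (a ^ (2 * u + 1)) ^ 2 := by ring
  exact le_of_pow_le_pow_left₀ two_ne_zero (by positivity) hcs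

theorem expect_expect_mix {α : Type*} [DecidableEq ι] [Fintype α] [Nonempty α]
    (δ : ι → Bool) (f : (ι → α) → ℝ) : 𝔼 x, 𝔼 y, f (mix δ x y) = 𝔼 z, f z := by
  have hswap : Function.Involutive fun p : (ι → α) × (ι → α) =>
      (mix δ p.1 p.2, mix δ p.2 p.1) := by
    intro p
    ext i <;> by_cases h : δ i <;> simp [mix, h]
  rw [← expect_product', univ_product_univ,
    Fintype.expect_equiv hswap.toPerm (fun p => f (mix δ p.1 p.2)) (fun p => f p.1) fun _ => rfl,
    ← univ_product_univ, expect_product' (f := fun x _ => f x)]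
  simp

end Expectation

theorem sum_range_two_mul_add_one_of_odd {M : Type*} [AddCommMonoid M] {f : ℕ → M}
    (hf : ∀ l, Odd l → f l = 0) (m : ℕ) :
    ∑ l ∈ range (2 * m + 1), f l = ∑ t ∈ range (m + 1), f (2 * t) := by
  induction m with
  | zero => simp
  | succ m ih =>
    rw [show 2 * (m + 1) + 1 = 2 * m + 1 + 1 + 1 by ring, sum_range_succ, sum_range_succ, ih,
      hf _ (odd_two_mul_add_one m), add_zero, sum_range_succ (fun t => f (2 * t)) (m + 1),
      mul_add_one]

-- `(2m)! / (2 ^ m * m!) = (2m - 1)‼` is the `2m`-th moment of a standard Gaussian.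
noncomputable def gaussMoment (m : ℕ) : ℝ := (2 * m)! / (2 ^ m * m !)

theorem gaussMoment_nonneg (m : ℕ) : 0 ≤ gaussMoment m := by
  unfold gaussMoment; positivity

theorem choose_mul_gaussMoment_le {m i : ℕ} (hi : i ≤ m) :
    ((2 * m).choose (2 * i) : ℝ) * gaussMoment (m - i) ≤ gaussMoment m * m.choose i := by
  have hsub : 2 * m - 2 * i = 2 * (m - i) := by omega
  have hkey : (2 : ℝ) ^ i * i ! ≤ (2 * i)! := by
    exact_mod_cast Nat.two_pow_mul_factorial_le_factorial_two_mul i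
  have hpow : (2 : ℝ) ^ m = 2 ^ i * 2 ^ (m - i) := by rw [← pow_add, Nat.add_sub_cancel' hi]
  rw [gaussMoment, gaussMoment, Nat.cast_choose ℝ (by omega : 2 * i ≤ 2 * m),
    Nat.cast_choose ℝ hi, hsub, hpow, div_mul_div_comm, div_mul_div_comm,
    div_le_div_iff₀ (by positivity) (by positivity)]
  calc ((2 * m)! * (2 * (m - i))! * (2 ^ i * 2 ^ (m - i) * m ! * (i ! * (m - i)!)) : ℝ)
      = ((2 * m)! * (2 * (m - i))! * (m - i)! * m ! * 2 ^ (m - i)) * (2 ^ i * i !) := by ring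
    _ ≤ ((2 * m)! * (2 * (m - i))! * (m - i)! * m ! * 2 ^ (m - i)) * (2 * i)! := by gcongr
    _ = (2 * m)! * m ! * ((2 * i)! * (2 * (m - i))! * (2 ^ (m - i) * (m - i)!)) := by ring

theorem gaussMoment_le (m : ℕ) : gaussMoment m ≤ (m : ℝ) ^ m := by
  have h : (2 * m)! ≤ m ! * (2 * m) ^ m := by
    rw [← Nat.factorial_mul_descFactorial (by omega : m ≤ 2 * m), show 2 * m - m = m by omega]
    gcongr
    exact Nat.descFactorial_le_pow _ _
  have h' : ((2 * m)! : ℝ) ≤ m ! * (2 ^ m * (m : ℝ) ^ m) := by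
    rw [← mul_pow]; exact_mod_cast h
  rw [gaussMoment, div_le_iff₀ (by positivity)]
  linarith

section Cube

variable {n : ℕ}

theorem signVec_sq (x : Fin n → Bool) (i : Fin n) : signVec x i ^ 2 = 1 := by
  unfold signVec; split <;> norm_num

theorem signVec_pow (x : Fin n → Bool) (i : Fin n) (l : ℕ) :
    signVec x i ^ l = if Even l then 1 else signVec x i := by
  obtain ⟨t, rfl | rfl⟩ := Nat.even_or_odd' l
  · simp [pow_mul, signVec_sq]
  · rw [pow_succ, pow_mul, signVec_sq, one_pow, one_mul, if_neg (Nat.not_even_two_mul_add_one t)]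

theorem expect_mul_signVec_eq_zero {f : (Fin n → Bool) → ℝ} (j : Fin n)
    (hf : ∀ x b, f (Function.update x j b) = f x) : 𝔼 x, f x * signVec x j = 0 := by
  have hflip : Function.Involutive fun x : Fin n → Bool => Function.update x j (!x j) :=
    fun x => by simp
  have := Fintype.expect_equiv hflip.toPerm (fun x => f x * signVec x j)
    (fun x => -(f x * signVec x j)) fun x => by
      rcases hx : x j <;> simp [signVec, hf, hx]
  rw [expect_neg_distrib] at this
  linarith

theorem expect_signVec (i : Fin n) : 𝔼 x, signVec x i = 0 := by
  simpa using expect_mul_signVec_eq_zero (f := fun _ => 1) i fun _ _ => rfl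

theorem expect_signVec_mul_signVec {i j : Fin n} (hij : i ≠ j) :
    𝔼 x, signVec x i * signVec x j = 0 :=
  expect_mul_signVec_eq_zero j fun x b => by simp [signVec, Function.update_of_ne hij]

theorem expect_signVec_pow_mul {g : (Fin n → Bool) → ℝ} (j : Fin n)
    (hg : ∀ x b, g (Function.update x j b) = g x) (l : ℕ) :
    𝔼 x, signVec x j ^ l * g x = if Even l then 𝔼 x, g x else 0 := by
  simp_rw [signVec_pow]
  split_ifs
  · simp
  · simpa [mul_comm] using expect_mul_signVec_eq_zero j hg

theorem expect_mul_signVec_add_pow {S : (Fin n → Bool) → ℝ} (j : Fin n)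
    (hS : ∀ x b, S (Function.update x j b) = S x) (a : ℝ) (m : ℕ) :
    𝔼 x, (a * signVec x j + S x) ^ (2 * m) =
      ∑ t ∈ range (m + 1), ((2 * m).choose (2 * t) : ℝ) * a ^ (2 * t) *
        𝔼 x, S x ^ (2 * (m - t)) := by
  have hterm (l : ℕ) :
      𝔼 x, (a * signVec x j) ^ l * S x ^ (2 * m - l) * ((2 * m).choose l : ℝ) =
        if Even l then ((2 * m).choose l : ℝ) * a ^ l * 𝔼 x, S x ^ (2 * m - l) else 0 := by
    have hS' : ∀ x b, S (Function.update x j b) ^ (2 * m - l) = S x ^ (2 * m - l) :=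
      fun x b => by rw [hS]
    calc _ = ((2 * m).choose l : ℝ) * a ^ l * 𝔼 x, signVec x j ^ l * S x ^ (2 * m - l) := by
          rw [mul_expect]; congr 1 with x; ring
      _ = _ := by rw [expect_signVec_pow_mul j hS' l]; split_ifs <;> simp
  simp_rw [add_pow]
  rw [expect_sum_comm]
  simp_rw [hterm]
  rw [sum_range_two_mul_add_one_of_odd fun l hl => by simp [Nat.not_even_iff_odd.mpr hl]]
  refine sum_congr rfl fun t _ => ?_
  rw [if_pos (even_two_mul t), show 2 * m - 2 * t = 2 * (m - t) by omega]

/-- Khintchine's inequality. -/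
theorem expect_sum_mul_signVec_pow_le (a : Fin n → ℝ) (s : Finset (Fin n)) (m : ℕ) :
    𝔼 x, (∑ i ∈ s, a i * signVec x i) ^ (2 * m) ≤ gaussMoment m * (∑ i ∈ s, a i ^ 2) ^ m := by
  induction s using Finset.cons_induction generalizing m with
  | empty => cases m <;> simp [gaussMoment]
  | cons j s hj ih =>
    set σ := ∑ i ∈ s, a i ^ 2
    have hS : ∀ x b, ∑ i ∈ s, a i * signVec (Function.update x j b) i =
        ∑ i ∈ s, a i * signVec x i := fun x b => sum_congr rfl fun i hi => by
      rw [signVec, signVec, Function.update_of_ne (ne_of_mem_of_not_mem hi hj)]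
    simp_rw [sum_cons]
    rw [expect_mul_signVec_add_pow j hS]
    calc _ ≤ ∑ t ∈ range (m + 1), ((2 * m).choose (2 * t) : ℝ) * a j ^ (2 * t) *
            (gaussMoment (m - t) * σ ^ (m - t)) := by
          gcongr with t
          · rw [pow_mul]; positivity
          · exact ih _
      _ ≤ ∑ t ∈ range (m + 1),
            gaussMoment m * ((m.choose t : ℝ) * (a j ^ 2) ^ t * σ ^ (m - t)) := by
          refine sum_le_sum fun t ht => ?_
          calc _ = ((2 * m).choose (2 * t) * gaussMoment (m - t)) *
                ((a j ^ 2) ^ t * σ ^ (m - t)) := by ring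
            _ ≤ (gaussMoment m * m.choose t) * ((a j ^ 2) ^ t * σ ^ (m - t)) :=
                mul_le_mul_of_nonneg_right
                  (choose_mul_gaussMoment_le (Nat.lt_succ_iff.mp (mem_range.mp ht)))
                  (by positivity)
            _ = _ := by ring
      _ = gaussMoment m * (a j ^ 2 + σ) ^ m := by
          rw [← mul_sum, add_pow]
          exact congrArg _ (sum_congr rfl fun t _ => by ring)

def mask (δ : Fin n → Bool) : Fin n → ℝ := fun i => if δ i then 1 else 0

theorem mask_eq (δ : Fin n → Bool) (i : Fin n) : mask δ i = (1 + signVec δ i) / 2 := by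
  unfold mask signVec; split <;> norm_num

theorem mask_nonneg (δ : Fin n → Bool) (i : Fin n) : 0 ≤ mask δ i := by
  unfold mask; split <;> norm_num

theorem mask_le_one (δ : Fin n → Bool) (i : Fin n) : mask δ i ≤ 1 := by
  unfold mask; split <;> norm_num

theorem expect_mask_mul_one_sub_mask (i j : Fin n) :
    𝔼 δ, mask δ i * (1 - mask δ j) = if i = j then 0 else 1 / 4 := by
  split_ifs with hij
  · subst hij
    exact expect_eq_zero fun δ _ => by simp only [mask]; split <;> norm_num
  have hexpand : ∀ δ : Fin n → Bool, (1 + signVec δ i) / 2 * (1 - (1 + signVec δ j) / 2) =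
      1 / 4 + signVec δ i / 4 - signVec δ j / 4 - signVec δ i * signVec δ j / 4 :=
    fun δ => by ring
  simp_rw [mask_eq, hexpand, expect_sub_distrib, expect_add_distrib]
  simp only [← expect_div, expect_signVec, expect_signVec_mul_signVec hij]
  norm_num

def offDiagForm (A : Matrix (Fin n) (Fin n) ℝ) (x : Fin n → ℝ) : ℝ :=
  ∑ i, ∑ j, if i = j then 0 else A i j * x i * x j

def decoupledForm (A : Matrix (Fin n) (Fin n) ℝ) (δ : Fin n → Bool) (x y : Fin n → ℝ) : ℝ :=
  ∑ i, ∑ j, mask δ i * (1 - mask δ j) * A i j * x i * y j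

theorem offDiagForm_eq_four_mul_expect_decoupledForm (A : Matrix (Fin n) (Fin n) ℝ)
    (x : Fin n → ℝ) : offDiagForm A x = 4 * 𝔼 δ, decoupledForm A δ x x := by
  unfold decoupledForm offDiagForm
  rw [expect_sum_comm, mul_sum]
  refine sum_congr rfl fun i _ => ?_
  rw [expect_sum_comm, mul_sum]
  refine sum_congr rfl fun j _ => ?_
  simp_rw [mul_assoc (mask _ i * _), ← expect_mul, expect_mask_mul_one_sub_mask]
  split_ifs <;> ring

theorem decoupledForm_signVec_mix (A : Matrix (Fin n) (Fin n) ℝ) (δ x y : Fin n → Bool) :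
    decoupledForm A δ (signVec (mix δ x y)) (signVec (mix δ x y)) =
      decoupledForm A δ (signVec x) (signVec y) := by
  unfold decoupledForm
  refine sum_congr rfl fun i _ => sum_congr rfl fun j _ => ?_
  by_cases hi : δ i <;> by_cases hj : δ j <;> simp [mask, mix, signVec, hi, hj]

theorem expect_decoupledForm_pow (A : Matrix (Fin n) (Fin n) ℝ) (δ : Fin n → Bool) (p : ℕ) :
    𝔼 x, decoupledForm A δ (signVec x) (signVec x) ^ p =
      𝔼 x, 𝔼 y, decoupledForm A δ (signVec x) (signVec y) ^ p := by
  rw [← expect_expect_mix δ]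
  simp_rw [decoupledForm_signVec_mix]

theorem expect_offDiagForm_pow_le_decoupled (A : Matrix (Fin n) (Fin n) ℝ) (m : ℕ) :
    𝔼 x, offDiagForm A (signVec x) ^ (2 * m) ≤
      16 ^ m * 𝔼 δ, 𝔼 x, 𝔼 y, decoupledForm A δ (signVec x) (signVec y) ^ (2 * m) :=
  calc 𝔼 x, offDiagForm A (signVec x) ^ (2 * m)
      = 16 ^ m * 𝔼 x, (𝔼 δ, decoupledForm A δ (signVec x) (signVec x)) ^ (2 * m) := by
        simp_rw [offDiagForm_eq_four_mul_expect_decoupledForm, mul_pow, ← mul_expect, pow_mul]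
        norm_num
    _ ≤ 16 ^ m * 𝔼 x, 𝔼 δ, decoupledForm A δ (signVec x) (signVec x) ^ (2 * m) := by
        gcongr with x
        exact pow_expect_le_expect_pow_of_even _ (even_two_mul m)
    _ = 16 ^ m * 𝔼 δ, 𝔼 x, 𝔼 y, decoupledForm A δ (signVec x) (signVec y) ^ (2 * m) := by
        rw [expect_comm]
        simp_rw [expect_decoupledForm_pow]

def decoupledCoeff (A : Matrix (Fin n) (Fin n) ℝ) (δ : Fin n → Bool) (x : Fin n → ℝ) :
    Fin n → ℝ :=
  (1 - mask δ) * ((mask δ * x) ᵥ* A)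

theorem decoupledForm_eq_sum (A : Matrix (Fin n) (Fin n) ℝ) (δ : Fin n → Bool)
    (x y : Fin n → ℝ) : decoupledForm A δ x y = ∑ j, decoupledCoeff A δ x j * y j := by
  simp only [decoupledForm, decoupledCoeff, vecMul, dotProduct, Pi.mul_apply, Pi.sub_apply,
    Pi.one_apply, mul_sum, sum_mul]
  rw [sum_comm]
  exact sum_congr rfl fun j _ => sum_congr rfl fun i _ => by ring

theorem expect_decoupledForm_pow_le (A : Matrix (Fin n) (Fin n) ℝ) (δ : Fin n → Bool)
    (x : Fin n → ℝ) (m : ℕ) :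
    𝔼 y, decoupledForm A δ x (signVec y) ^ (2 * m) ≤
      gaussMoment m * (∑ j, decoupledCoeff A δ x j ^ 2) ^ m := by
  simp_rw [decoupledForm_eq_sum]
  exact expect_sum_mul_signVec_pow_le _ univ m

theorem expect_offDiagForm_pow_le_expect_decoupledCoeff (A : Matrix (Fin n) (Fin n) ℝ)
    (m : ℕ) : 𝔼 x, offDiagForm A (signVec x) ^ (2 * m) ≤
      16 ^ m * gaussMoment m * 𝔼 δ, 𝔼 x, (∑ j, decoupledCoeff A δ (signVec x) j ^ 2) ^ m := by
  refine (expect_offDiagForm_pow_le_decoupled A m).trans ?_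
  rw [mul_assoc]
  gcongr 16 ^ m * ?_
  rw [mul_expect]
  refine expect_le_expect fun δ _ => ?_
  rw [mul_expect]
  exact expect_le_expect fun x _ => expect_decoupledForm_pow_le A δ _ m

theorem frobNorm_nonneg (A : Matrix (Fin n) (Fin n) ℝ) : 0 ≤ frobNorm A :=
  Real.sqrt_nonneg _

theorem frobNorm_sq (A : Matrix (Fin n) (Fin n) ℝ) : frobNorm A ^ 2 = ∑ i, ∑ j, A i j ^ 2 :=
  Real.sq_sqrt (by positivity)

theorem dotProduct_mulVec_eq_sum_add_offDiagForm (A : Matrix (Fin n) (Fin n) ℝ)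
    (x : Fin n → ℝ) : x ⬝ᵥ A *ᵥ x = ∑ i, A i i * x i ^ 2 + offDiagForm A x := by
  simp only [dotProduct, mulVec, offDiagForm, mul_sum, ← sum_add_distrib]
  refine sum_congr rfl fun i _ => ?_
  have hsplit : ∀ j, x i * (A i j * x j) =
      (if i = j then A i i * x i ^ 2 else 0) + if i = j then 0 else A i j * x i * x j := by
    intro j
    split_ifs with h
    · subst h; ring
    · ring
  simp [hsplit, sum_add_distrib]

theorem offDiagForm_diagonal_mul_mul_diagonal (p : Fin n → ℝ) (G : Matrix (Fin n) (Fin n) ℝ)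
    (x : Fin n → ℝ) : offDiagForm (diagonal p * G * diagonal p) x = offDiagForm G (p * x) := by
  unfold offDiagForm
  refine sum_congr rfl fun i _ => sum_congr rfl fun j _ => ?_
  simp only [mul_diagonal, diagonal_mul, Pi.mul_apply]
  split_ifs <;> ring

def maskedGram (A : Matrix (Fin n) (Fin n) ℝ) (δ : Fin n → Bool) : Matrix (Fin n) (Fin n) ℝ :=
  diagonal (mask δ) * (A * Aᵀ) * diagonal (mask δ)

theorem sum_decoupledCoeff_sq_le (A : Matrix (Fin n) (Fin n) ℝ) (δ x : Fin n → Bool) :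
    ∑ j, decoupledCoeff A δ (signVec x) j ^ 2 ≤
      frobNorm A ^ 2 + offDiagForm (maskedGram A δ) (signVec x) := by
  set u := mask δ * signVec x
  have hu : ∀ i, u i ^ 2 ≤ 1 := fun i => by
    simp only [u, Pi.mul_apply, mul_pow, signVec_sq, mul_one]
    exact pow_le_one₀ (mask_nonneg δ i) (mask_le_one δ i)
  have hcoeff : ∑ j, decoupledCoeff A δ (signVec x) j ^ 2 ≤ ∑ j, (u ᵥ* A) j ^ 2 := by
    refine sum_le_sum fun j _ => ?_
    simp only [decoupledCoeff, Pi.mul_apply, Pi.sub_apply, Pi.one_apply, mul_pow]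
    have : (1 - mask δ j) ^ 2 ≤ 1 :=
      pow_le_one₀ (by linarith [mask_le_one δ j]) (by linarith [mask_nonneg δ j])
    nlinarith [sq_nonneg ((u ᵥ* A) j)]
  have hgram : ∑ j, (u ᵥ* A) j ^ 2 = u ⬝ᵥ (A * Aᵀ) *ᵥ u := by
    rw [← mulVec_mulVec, mulVec_transpose, dotProduct_mulVec]
    simp [dotProduct, sq]
  have hdiag : ∑ i, (A * Aᵀ) i i * u i ^ 2 ≤ frobNorm A ^ 2 := by
    rw [frobNorm_sq]
    refine sum_le_sum fun i _ => ?_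
    have : (A * Aᵀ) i i = ∑ j, A i j ^ 2 := by simp [mul_apply, sq]
    rw [this]
    exact mul_le_of_le_one_right (by positivity) (hu i)
  rw [maskedGram, offDiagForm_diagonal_mul_mul_diagonal]
  linarith [dotProduct_mulVec_eq_sum_add_offDiagForm (A * Aᵀ) u]

theorem expect_offDiagForm_signVec (A : Matrix (Fin n) (Fin n) ℝ) :
    𝔼 x, offDiagForm A (signVec x) = 0 := by
  unfold offDiagForm
  rw [expect_sum_comm]
  refine sum_eq_zero fun i _ => ?_
  rw [expect_sum_comm]
  refine sum_eq_zero fun j _ => ?_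
  split_ifs with hij
  · simp
  · simp_rw [mul_assoc, ← mul_expect, expect_signVec_mul_signVec hij, mul_zero]

theorem expect_sum_decoupledCoeff_sq_le (A : Matrix (Fin n) (Fin n) ℝ) (δ : Fin n → Bool) :
    𝔼 x, ∑ j, decoupledCoeff A δ (signVec x) j ^ 2 ≤ frobNorm A ^ 2 :=
  calc 𝔼 x, ∑ j, decoupledCoeff A δ (signVec x) j ^ 2
      ≤ 𝔼 x, (frobNorm A ^ 2 + offDiagForm (maskedGram A δ) (signVec x)) :=
        expect_le_expect fun x _ => sum_decoupledCoeff_sq_le A δ x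
    _ = frobNorm A ^ 2 := by rw [expect_add_distrib, expect_offDiagForm_signVec]; simp

theorem expect_sum_decoupledCoeff_sq_pow_le (A : Matrix (Fin n) (Fin n) ℝ) (δ : Fin n → Bool)
    {m : ℕ} {a : ℝ} (h : 𝔼 x, |offDiagForm (maskedGram A δ) (signVec x)| ^ m ≤ a) :
    𝔼 x, (∑ j, decoupledCoeff A δ (signVec x) j ^ 2) ^ m ≤
      2 ^ m * (frobNorm A ^ (2 * m) + a) := by
  have hpt (x : Fin n → Bool) : (∑ j, decoupledCoeff A δ (signVec x) j ^ 2) ^ m ≤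
      2 ^ m * (frobNorm A ^ (2 * m) + |offDiagForm (maskedGram A δ) (signVec x)| ^ m) := by
    set Z := |offDiagForm (maskedGram A δ) (signVec x)|
    calc (∑ j, decoupledCoeff A δ (signVec x) j ^ 2) ^ m ≤ (frobNorm A ^ 2 + Z) ^ m :=
          pow_le_pow_left₀ (by positivity)
            ((sum_decoupledCoeff_sq_le A δ x).trans (by gcongr; exact le_abs_self _)) m
      _ ≤ 2 ^ (m - 1) * ((frobNorm A ^ 2) ^ m + Z ^ m) :=
          add_pow_le (by positivity) (abs_nonneg _) m
      _ ≤ 2 ^ m * (frobNorm A ^ (2 * m) + Z ^ m) := by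
          rw [← pow_mul]
          exact mul_le_mul_of_nonneg_right (pow_le_pow_right₀ one_le_two (Nat.sub_le m 1))
            (add_nonneg (pow_nonneg (frobNorm_nonneg A) _) (by positivity))
  calc 𝔼 x, (∑ j, decoupledCoeff A δ (signVec x) j ^ 2) ^ m
      ≤ 𝔼 x, 2 ^ m * (frobNorm A ^ (2 * m) + |offDiagForm (maskedGram A δ) (signVec x)| ^ m) :=
        expect_le_expect fun x _ => hpt x
    _ ≤ 2 ^ m * (frobNorm A ^ (2 * m) + a) := by
        rw [← mul_expect, expect_add_distrib, Fintype.expect_const]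
        gcongr

theorem sum_mulVec_sq_le (A : Matrix (Fin n) (Fin n) ℝ) (v : Fin n → ℝ) :
    ∑ i, (A *ᵥ v) i ^ 2 ≤ ‖A‖ ^ 2 * ∑ i, v i ^ 2 := by
  have h := pow_le_pow_left₀ (norm_nonneg _) (l2_opNorm_mulVec A (WithLp.toLp 2 v)) 2
  rw [mul_pow, EuclideanSpace.norm_sq_eq, EuclideanSpace.norm_sq_eq] at h
  simpa using h

theorem l2_opNorm_transpose (A : Matrix (Fin n) (Fin n) ℝ) : ‖Aᵀ‖ = ‖A‖ := by
  rw [← conjTranspose_eq_transpose_of_trivial, l2_opNorm_conjTranspose]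

theorem frobNorm_maskedGram_le (A : Matrix (Fin n) (Fin n) ℝ) (δ : Fin n → Bool) :
    frobNorm (maskedGram A δ) ≤ ‖A‖ * frobNorm A := by
  refine le_of_pow_le_pow_left₀ two_ne_zero
    (mul_nonneg (norm_nonneg A) (frobNorm_nonneg A)) ?_
  rw [mul_pow, frobNorm_sq, frobNorm_sq]
  have hentry (i i' : Fin n) : maskedGram A δ i i' ^ 2 ≤ (A *ᵥ A i') i ^ 2 := by
    have : maskedGram A δ i i' = mask δ i * mask δ i' * (A *ᵥ A i') i := by
      rw [maskedGram, mul_diagonal, diagonal_mul, mul_apply]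
      simp only [transpose_apply, mulVec, dotProduct]
      ring
    rw [this, mul_pow, mul_pow]
    refine mul_le_of_le_one_left (sq_nonneg _) (mul_le_one₀ ?_ (by positivity) ?_) <;>
      exact pow_le_one₀ (mask_nonneg δ _) (mask_le_one δ _)
  calc ∑ i, ∑ i', maskedGram A δ i i' ^ 2 ≤ ∑ i', ∑ i, (A *ᵥ A i') i ^ 2 := by
        rw [sum_comm]; exact sum_le_sum fun i' _ => sum_le_sum fun i _ => hentry i i'
    _ ≤ ∑ i', ‖A‖ ^ 2 * ∑ j, A i' j ^ 2 := sum_le_sum fun i' _ => sum_mulVec_sq_le A (A i')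
    _ = ‖A‖ ^ 2 * ∑ i, ∑ j, A i j ^ 2 := by rw [mul_sum]

theorem norm_maskedGram_le (A : Matrix (Fin n) (Fin n) ℝ) (δ : Fin n → Bool) :
    ‖maskedGram A δ‖ ≤ ‖A‖ * ‖A‖ := by
  set P : Matrix (Fin n) (Fin n) ℝ := diagonal (mask δ)
  have hP : ‖P‖ ≤ 1 := by
    rw [l2_opNorm_diagonal]
    refine (pi_norm_le_iff_of_nonneg zero_le_one).mpr fun i => ?_
    rw [Real.norm_of_nonneg (mask_nonneg δ i)]
    exact mask_le_one δ i
  calc ‖maskedGram A δ‖ ≤ ‖P‖ * (‖A‖ * ‖Aᵀ‖) * ‖P‖ := by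
        refine (norm_mul_le _ _).trans ?_
        gcongr
        exact (norm_mul_le _ _).trans (by gcongr; exact norm_mul_le _ _)
    _ ≤ 1 * (‖A‖ * ‖A‖) * 1 := by rw [l2_opNorm_transpose]; gcongr
    _ = ‖A‖ * ‖A‖ := by ring

noncomputable def momentScale (A : Matrix (Fin n) (Fin n) ℝ) (p : ℕ) : ℝ :=
  max (Real.sqrt p * frobNorm A) (p * ‖A‖)

theorem momentScale_nonneg (A : Matrix (Fin n) (Fin n) ℝ) (p : ℕ) : 0 ≤ momentScale A p :=
  le_max_of_le_right (by positivity)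

theorem sq_frobNorm_le_momentScale (A : Matrix (Fin n) (Fin n) ℝ) (p : ℕ) :
    p * frobNorm A ^ 2 ≤ momentScale A p ^ 2 := by
  have h : (Real.sqrt p * frobNorm A) ^ 2 ≤ momentScale A p ^ 2 :=
    pow_le_pow_left₀ (by have := frobNorm_nonneg A; positivity) (le_max_left _ _) 2
  rwa [mul_pow, Real.sq_sqrt (Nat.cast_nonneg p)] at h

theorem mul_norm_le_momentScale (A : Matrix (Fin n) (Fin n) ℝ) (p : ℕ) :
    p * ‖A‖ ≤ momentScale A p :=
  le_max_right _ _

theorem momentScale_mono (A : Matrix (Fin n) (Fin n) ℝ) {p q : ℕ} (h : p ≤ q) :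
    momentScale A p ≤ momentScale A q := by
  have h' : (p : ℝ) ≤ q := by exact_mod_cast h
  have := frobNorm_nonneg A
  unfold momentScale
  gcongr

theorem momentScale_le_two_mul (A : Matrix (Fin n) (Fin n) ℝ) {p q : ℕ} (h : p ≤ 2 * q) :
    momentScale A p ≤ 2 * momentScale A q := by
  have h' : (p : ℝ) ≤ 2 * q := by exact_mod_cast h
  have hsqrt : Real.sqrt p ≤ 2 * Real.sqrt q := by
    rw [show (2 : ℝ) = Real.sqrt (2 ^ 2) by rw [Real.sqrt_sq zero_le_two],
      ← Real.sqrt_mul (by norm_num)]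
    exact Real.sqrt_le_sqrt (by linarith)
  have := frobNorm_nonneg A
  unfold momentScale
  rw [mul_max_of_nonneg _ _ zero_le_two, ← mul_assoc, ← mul_assoc]
  gcongr

theorem momentScale_maskedGram_le (A : Matrix (Fin n) (Fin n) ℝ) (δ : Fin n → Bool) (p : ℕ) :
    momentScale (maskedGram A δ) p ≤ ‖A‖ * momentScale A p := by
  unfold momentScale
  rw [mul_max_of_nonneg _ _ (norm_nonneg A), mul_left_comm, mul_left_comm ‖A‖]
  gcongr
  · exact frobNorm_maskedGram_le A δ
  · exact norm_maskedGram_le A δ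

theorem sixteen_pow_mul_gaussMoment_mul_le (A : Matrix (Fin n) (Fin n) ℝ) {m : ℕ} (hm : 1 ≤ m) :
    16 ^ m * gaussMoment m *
        (2 ^ m * (frobNorm A ^ (2 * m) + (32 * ‖A‖ * momentScale A (2 * m)) ^ m)) ≤
      (32 * momentScale A (2 * m)) ^ (2 * m) := by
  set D := momentScale A (2 * m)
  have hD : 0 ≤ D := momentScale_nonneg A _
  have hF : (m : ℝ) ^ m * frobNorm A ^ (2 * m) ≤ (D ^ 2 / 2) ^ m := by
    have := sq_frobNorm_le_momentScale A (2 * m)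
    push_cast at this
    rw [pow_mul, ← mul_pow]
    exact pow_le_pow_left₀ (by have := frobNorm_nonneg A; positivity) (by linarith) m
  have hN : (m : ℝ) ^ m * (32 * ‖A‖ * D) ^ m ≤ 32 ^ m * (D ^ 2 / 2) ^ m := by
    have := mul_norm_le_momentScale A (2 * m)
    push_cast at this
    rw [← mul_pow, ← mul_pow]
    exact pow_le_pow_left₀ (by positivity) (by nlinarith [norm_nonneg A]) m
  have hconst : (16 : ℝ) ^ m * (1 + 32 ^ m) ≤ (32 ^ 2) ^ m := by
    have h2 : (2 : ℝ) ≤ 2 ^ m := le_self_pow₀ one_le_two (by omega)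
    have h32 : (1 : ℝ) ≤ 32 ^ m := one_le_pow₀ (by norm_num)
    calc (16 : ℝ) ^ m * (1 + 32 ^ m) ≤ 16 ^ m * (2 ^ m * 32 ^ m) := by gcongr; nlinarith
      _ = (32 ^ 2) ^ m := by rw [← mul_pow, ← mul_pow]; norm_num
  calc 16 ^ m * gaussMoment m * (2 ^ m * (frobNorm A ^ (2 * m) + (32 * ‖A‖ * D) ^ m))
      = 16 ^ m * 2 ^ m * (gaussMoment m * (frobNorm A ^ (2 * m) + (32 * ‖A‖ * D) ^ m)) := by
        ring
    _ ≤ 16 ^ m * 2 ^ m * ((m : ℝ) ^ m * (frobNorm A ^ (2 * m) + (32 * ‖A‖ * D) ^ m)) := by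
        have := frobNorm_nonneg A
        gcongr
        exact gaussMoment_le m
    _ ≤ 16 ^ m * 2 ^ m * ((D ^ 2 / 2) ^ m + 32 ^ m * (D ^ 2 / 2) ^ m) := by
        rw [mul_add]; gcongr
    _ = 16 ^ m * (1 + 32 ^ m) * (D ^ 2) ^ m := by
        rw [div_pow]; field_simp
    _ ≤ (32 ^ 2) ^ m * (D ^ 2) ^ m := by gcongr
    _ = (32 * D) ^ (2 * m) := by rw [pow_mul, mul_pow, mul_pow]

theorem expect_offDiagForm_pow_two_mul_le (A : Matrix (Fin n) (Fin n) ℝ) (m : ℕ) :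
    𝔼 x, offDiagForm A (signVec x) ^ (2 * m) ≤ (32 * momentScale A (2 * m)) ^ (2 * m) := by
  induction m using Nat.strong_induction_on generalizing A with
  | _ m ih =>
  refine (expect_offDiagForm_pow_le_expect_decoupledCoeff A m).trans ?_
  obtain rfl | rfl | hm : m = 0 ∨ m = 1 ∨ 2 ≤ m := by omega
  · simp [gaussMoment]
  -- For `m = 1`, bounding `𝔼 |Z_B|` would need the case `m = 1` itself; use `𝔼 Z_B = 0` instead.
  · have hF := sq_frobNorm_le_momentScale A 2
    have hD := momentScale_nonneg A 2
    have hG : gaussMoment 1 = 1 := by norm_num [gaussMoment]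
    simp only [hG, pow_one, mul_one]
    calc 16 * 𝔼 δ, 𝔼 x, ∑ j, decoupledCoeff A δ (signVec x) j ^ 2 ≤ 16 * frobNorm A ^ 2 := by
          gcongr
          exact expect_le univ_nonempty fun δ _ => expect_sum_decoupledCoeff_sq_le A δ
      _ ≤ (32 * momentScale A 2) ^ 2 := by push_cast at hF; nlinarith
  set D := momentScale A (2 * m)
  have hD : 0 ≤ D := momentScale_nonneg A _
  have hgram (δ : Fin n → Bool) :
      𝔼 x, |offDiagForm (maskedGram A δ) (signVec x)| ^ m ≤ (32 * ‖A‖ * D) ^ m := by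
    refine expect_abs_pow_le_of_even_moments _ (by positivity) fun j hj =>
      (ih j (by omega) _).trans ?_
    refine pow_le_pow_left₀ (by positivity [momentScale_nonneg (maskedGram A δ) (2 * j)]) ?_ _
    rw [mul_assoc]
    gcongr
    exact (momentScale_maskedGram_le A δ _).trans (by gcongr; exact momentScale_mono A (by omega))
  calc 16 ^ m * gaussMoment m * 𝔼 δ, 𝔼 x, (∑ j, decoupledCoeff A δ (signVec x) j ^ 2) ^ m
      ≤ 16 ^ m * gaussMoment m * (2 ^ m * (frobNorm A ^ (2 * m) + (32 * ‖A‖ * D) ^ m)) := by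
        have := gaussMoment_nonneg m
        gcongr
        exact expect_le univ_nonempty fun δ _ => expect_sum_decoupledCoeff_sq_pow_le A δ (hgram δ)
    _ ≤ (32 * D) ^ (2 * m) := sixteen_pow_mul_gaussMoment_mul_le A (by omega)

theorem expect_abs_offDiagForm_pow_le (A : Matrix (Fin n) (Fin n) ℝ) (k : ℕ) :
    𝔼 x, |offDiagForm A (signVec x)| ^ k ≤ (64 * momentScale A k) ^ k :=
  expect_abs_pow_le_of_even_moments _ (by positivity [momentScale_nonneg A k]) fun m hm =>
    (expect_offDiagForm_pow_two_mul_le A m).trans <|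
      pow_le_pow_left₀ (by positivity [momentScale_nonneg A (2 * m)])
        (by linarith [momentScale_le_two_mul A (show 2 * m ≤ 2 * k by omega)]) _

theorem isEigenvalue_iff_mem_spectrum (A : Matrix (Fin n) (Fin n) ℝ) (μ : ℝ) :
    IsEigenvalue A μ ↔ μ ∈ spectrum ℝ A := by
  rw [← spectrum_toLin', ← Module.End.hasEigenvalue_iff_mem_spectrum,
    Module.End.hasEigenvalue_iff, Submodule.ne_bot_iff]
  simp only [IsEigenvalue, Module.End.mem_eigenspace_iff, toLin'_apply]
  exact exists_congr fun v => and_comm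

theorem lambdaMax_eq_norm (A : Matrix (Fin n) (Fin n) ℝ) (hA : A.IsSymm) (hn : 1 ≤ n) :
    lambdaMax A = ‖A‖ := by
  have : Nonempty (Fin n) := ⟨⟨0, hn⟩⟩
  have hA' : IsSelfAdjoint A := by
    rw [← isHermitian_iff_isSelfAdjoint, IsHermitian, conjTranspose_eq_transpose_of_trivial]
    exact hA
  have hset : {r : ℝ | ∃ μ, IsEigenvalue A μ ∧ r = |μ|} = (‖·‖) '' spectrum ℝ A := by
    ext r
    simp [isEigenvalue_iff_mem_spectrum, eq_comm]
  rw [lambdaMax, hset]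
  exact (IsometricContinuousFunctionalCalculus.isGreatest_norm_spectrum A hA').csSup_eq

theorem expUnif_eq_expect (f : (Fin n → ℝ) → ℝ) : expUnif n f = 𝔼 x, f (signVec x) := by
  rw [expUnif, Fintype.expect_eq_sum_div_card]
  simp

end Cube

/-- A spectral moment bound for quadratic forms over the hypercube
(Theorem `eigenbound`). -/
theorem spectral_moment_bound_quadratic_forms :
    ∃ C : ℝ, 0 < C ∧
      ∀ (n : ℕ), 1 ≤ n →
      ∀ A : Matrix (Fin n) (Fin n) ℝ, A.IsSymm →
      ∀ k : ℕ, 2 ≤ k →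
        expUnif n (fun x => |dotProduct x (A.mulVec x) - A.trace| ^ k)
          ≤ C ^ k * max (Real.sqrt k * frobNorm A) (k * lambdaMax A) ^ k := by
  refine ⟨64, by norm_num, fun n hn A hA k _ => ?_⟩
  have hquad (x : Fin n → Bool) :
      signVec x ⬝ᵥ A *ᵥ signVec x - A.trace = offDiagForm A (signVec x) := by
    simp [dotProduct_mulVec_eq_sum_add_offDiagForm, signVec_sq, trace]
  simp_rw [expUnif_eq_expect, hquad, lambdaMax_eq_norm A hA hn, ← mul_pow]
  exact expect_abs_offDiagForm_pow_le A k
end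

section
/- There is a universal constant C > 0 such that the following holds. Let f(x) = ∑_{i≤j} a_{ij} x_i x_j be a quadratic form in n variables with associated symmetric matrix A_f (so f(x) = xᵀA_f x), let k ≥ 2 be an integer, and let X = (X₁,…,Xₙ) be independent uniform ±1 random variables. Then E[|f(X)|^k] ≤ C^k · max{‖A_f‖₂ · k, |tr(A_f)|}^k. -/
/-!
On `{±1}ⁿ` we have `xᵀAx = tr A + g x` with `g x = ∑_{i ≠ j} A i j xᵢ xⱼ`, a multilinear
polynomial of degree 2 whose coefficients have square sum at most `2‖A‖₂²`. Bonami's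
hypercontractive inequality `‖∑_σ c_σ x^σ‖_{2m}² ≤ ∑_σ (2m-1)^|σ| c_σ²` gives
`‖g‖_{2k} ≤ 3k‖A‖₂`, hence by Minkowski `‖xᵀAx‖_k ≤ ‖xᵀAx‖_{2k} ≤ |tr A| + 3k‖A‖₂`.
Bonami's inequality is proved by induction on `n`, splitting off one coordinate; the inductive
step is the two-point inequality `(a+b)^{2m} + (a-b)^{2m} ≤ 2(a² + (2m-1)b²)^m`, which holds
coefficientwise because `C(2m, 2j) ≤ C(m, j) (2m-1)^j`.
-/

open MeasureTheory

open Finset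

theorem Nat.choose_two_mul_le (m j : ℕ) :
    (2 * m).choose (2 * j) ≤ m.choose j * (2 * m - 1) ^ j := by
  -- pair the factors of `(2m)(2m-1)⋯(2m-2j+1)` as `2(m-i) · (2m-2i-1) ≤ 2(m-i) · (2m-1)`
  have hdesc : (2 * m).descFactorial (2 * j) ≤ 2 ^ j * m.descFactorial j * (2 * m - 1) ^ j := by
    induction j with
    | zero => simp
    | succ j ih =>
      rw [show 2 * (j + 1) = 2 * j + 1 + 1 by ring, Nat.descFactorial_succ, Nat.descFactorial_succ,
        Nat.descFactorial_succ, show 2 * m - 2 * j = 2 * (m - j) by omega]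
      calc (2 * m - (2 * j + 1)) * (2 * (m - j) * (2 * m).descFactorial (2 * j))
          ≤ (2 * m - 1) * (2 * (m - j) * (2 ^ j * m.descFactorial j * (2 * m - 1) ^ j)) := by
            gcongr; omega
        _ = 2 ^ (j + 1) * ((m - j) * m.descFactorial j) * (2 * m - 1) ^ (j + 1) := by ring
  have hfact := Nat.two_pow_mul_factorial_le_factorial_two_mul j
  rw [Nat.descFactorial_eq_factorial_mul_choose, Nat.descFactorial_eq_factorial_mul_choose] at hdesc
  refine (Nat.mul_le_mul_left_iff (Nat.factorial_pos (2 * j))).1 ?_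
  calc (2 * j).factorial * (2 * m).choose (2 * j)
      ≤ 2 ^ j * j.factorial * (m.choose j * (2 * m - 1) ^ j) := hdesc.trans_eq (by ring)
    _ ≤ (2 * j).factorial * (m.choose j * (2 * m - 1) ^ j) := Nat.mul_le_mul_right _ hfact

theorem sum_range_two_mul_add_one {M : Type*} [AddCommMonoid M] (h : ℕ → M) (m : ℕ) :
    ∑ i ∈ range (2 * m + 1), h i
      = ∑ j ∈ range (m + 1), h (2 * j) + ∑ j ∈ range m, h (2 * j + 1) := by
  induction m with
  | zero => simp
  | succ m ih =>
    rw [show 2 * (m + 1) + 1 = 2 * m + 1 + 1 + 1 by ring, sum_range_succ, sum_range_succ, ih]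
    simp only [sum_range_succ, mul_add, mul_one]
    abel

theorem add_pow_two_mul_add_sub_pow_two_mul_le (m : ℕ) (a b : ℝ) :
    (a + b) ^ (2 * m) + (a - b) ^ (2 * m) ≤ 2 * (a ^ 2 + (2 * m - 1) * b ^ 2) ^ m := by
  rcases m.eq_zero_or_pos with rfl | hm
  · norm_num
  have expand : (a + b) ^ (2 * m) + (a - b) ^ (2 * m)
      = ∑ j ∈ range (m + 1),
          2 * ((b ^ 2) ^ j * (a ^ 2) ^ (m - j) * (2 * m).choose (2 * j)) := by
    rw [add_comm a, sub_eq_neg_add, add_pow, add_pow, ← sum_add_distrib,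
      sum_range_two_mul_add_one,
      sum_eq_zero (s := range m) (fun j _ => by rw [Odd.neg_pow ⟨j, rfl⟩]; ring), add_zero]
    refine sum_congr rfl fun j hj => ?_
    rw [Even.neg_pow ⟨j, by ring⟩, pow_mul, show 2 * m - 2 * j = 2 * (m - j) by
      simp at hj; omega, pow_mul]
    ring
  have hK : ((2 * m - 1 : ℕ) : ℝ) = 2 * m - 1 := by
    rw [Nat.cast_sub (by omega)]; push_cast; ring
  rw [expand, add_comm (a ^ 2), add_pow, mul_sum]
  refine sum_le_sum fun j hj => ?_
  have hchoose : ((2 * m).choose (2 * j) : ℝ) ≤ m.choose j * (2 * m - 1) ^ j := by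
    rw [← hK]; exact_mod_cast Nat.choose_two_mul_le m j
  calc 2 * ((b ^ 2) ^ j * (a ^ 2) ^ (m - j) * (2 * m).choose (2 * j))
      ≤ 2 * ((b ^ 2) ^ j * (a ^ 2) ^ (m - j) * (m.choose j * (2 * m - 1) ^ j)) := by gcongr
    _ = 2 * (((2 * m - 1) * b ^ 2) ^ j * (a ^ 2) ^ (m - j) * m.choose j) := by rw [mul_pow]; ring

theorem sum_add_pow_le {ι : Type*} [Fintype ι] {u v : ι → ℝ} (hu : 0 ≤ u) (hv : 0 ≤ v)
    {m : ℕ} (hm : m ≠ 0) {W α β : ℝ} (hW : 0 ≤ W) (hα : 0 ≤ α) (hβ : 0 ≤ β)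
    (hu_sum : ∑ i, u i ^ m ≤ W * α ^ m) (hv_sum : ∑ i, v i ^ m ≤ W * β ^ m) :
    ∑ i, (u i + v i) ^ m ≤ W * (α + β) ^ m := by
  have hm_inv : (0 : ℝ) < (m : ℝ)⁻¹ := by positivity
  have root_le {w : ι → ℝ} {γ : ℝ} (hw : 0 ≤ w) (hγ : 0 ≤ γ)
      (h : ∑ i, w i ^ m ≤ W * γ ^ m) :
      (∑ i, w i ^ m) ^ (m⁻¹ : ℝ) ≤ W ^ (m⁻¹ : ℝ) * γ := by
    calc (∑ i, w i ^ m) ^ (m⁻¹ : ℝ) ≤ (W * γ ^ m) ^ (m⁻¹ : ℝ) :=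
          Real.rpow_le_rpow (sum_nonneg fun i _ => pow_nonneg (hw i) m) h hm_inv.le
      _ = W ^ (m⁻¹ : ℝ) * γ := by
          rw [Real.mul_rpow hW (by positivity), Real.pow_rpow_inv_natCast hγ hm]
  have minkowski := Real.Lp_add_le_of_nonneg univ (p := m)
    (by exact_mod_cast Nat.one_le_iff_ne_zero.2 hm) (fun i _ => hu i) (fun i _ => hv i)
  simp only [Real.rpow_natCast, one_div] at minkowski
  rw [← Real.rpow_le_rpow_iff (sum_nonneg fun i _ => pow_nonneg (add_nonneg (hu i) (hv i)) m)
    (by positivity) hm_inv, Real.mul_rpow hW (by positivity),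
    Real.pow_rpow_inv_natCast (by positivity) hm]
  calc _ ≤ _ := minkowski
    _ ≤ W ^ (m⁻¹ : ℝ) * α + W ^ (m⁻¹ : ℝ) * β :=
        add_le_add (root_le hu hα hu_sum) (root_le hv hβ hv_sum)
    _ = _ := by ring

theorem sum_le_card_mul_of_sum_sq_le {ι : Type*} [Fintype ι] {u : ι → ℝ} {B : ℝ}
    (hB : 0 ≤ B) (h : ∑ i, u i ^ 2 ≤ Fintype.card ι * B ^ 2) :
    ∑ i, u i ≤ Fintype.card ι * B := by
  refine (le_abs_self _).trans (abs_le_of_sq_le_sq ?_ (by positivity))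
  calc (∑ i, u i) ^ 2 ≤ Fintype.card ι * ∑ i, u i ^ 2 := sq_sum_le_card_mul_sum_sq
    _ ≤ Fintype.card ι * (Fintype.card ι * B ^ 2) := by gcongr
    _ = (Fintype.card ι * B) ^ 2 := by ring

theorem sum_abs_add_pow_le {ι : Type*} [Fintype ι] (t : ℝ) {u : ι → ℝ} {k : ℕ}
    (hk : k ≠ 0) {β : ℝ} (hβ : 0 ≤ β)
    (hu : ∑ i, u i ^ (2 * k) ≤ Fintype.card ι * β ^ (2 * k)) :
    ∑ i, |t + u i| ^ k ≤ Fintype.card ι * (|t| + β) ^ k := by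
  have hconst : ∑ _i : ι, |t| ^ (2 * k) ≤ Fintype.card ι * |t| ^ (2 * k) := by simp
  have habs : ∑ i, |u i| ^ (2 * k) ≤ Fintype.card ι * β ^ (2 * k) := by
    simpa only [(even_two_mul k).pow_abs] using hu
  have hsum := sum_add_pow_le (fun _ => abs_nonneg t) (fun i => abs_nonneg (u i)) (by omega)
    (by positivity) (abs_nonneg t) hβ hconst habs
  refine sum_le_card_mul_of_sum_sq_le (by positivity) ?_
  calc ∑ i, (|t + u i| ^ k) ^ 2 ≤ ∑ i, (|t| + |u i|) ^ (2 * k) := by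
        gcongr with i; rw [← pow_mul, mul_comm]; gcongr; exact abs_add_le t (u i)
    _ ≤ Fintype.card ι * (|t| + β) ^ (2 * k) := hsum
    _ = Fintype.card ι * ((|t| + β) ^ k) ^ 2 := by ring

theorem sum_mul_sum_fiberwise {α β : Type*} [Fintype β] [DecidableEq β] (s : Finset α)
    (g : α → β) (w : α → ℝ) (φ : β → ℝ) :
    ∑ b, (∑ a ∈ s with g a = b, w a) * φ b = ∑ a ∈ s, w a * φ (g a) := by
  rw [← sum_fiberwise s g]
  refine sum_congr rfl fun b _ => ?_
  rw [sum_mul]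
  exact sum_congr rfl fun a ha => by rw [(mem_filter.1 ha).2]

theorem sum_sq_sum_fiberwise_mul_le {α β : Type*} [Fintype β] [DecidableEq β] {s : Finset α}
    {g : α → β} {r : ℕ} (hr : ∀ b, #{a ∈ s | g a = b} ≤ r) (w : α → ℝ)
    {φ : β → ℝ} (hφ : 0 ≤ φ) :
    ∑ b, (∑ a ∈ s with g a = b, w a) ^ 2 * φ b ≤ r * ∑ a ∈ s, w a ^ 2 * φ (g a) := by
  calc ∑ b, (∑ a ∈ s with g a = b, w a) ^ 2 * φ b
      ≤ ∑ b, (r * ∑ a ∈ s with g a = b, w a ^ 2) * φ b := by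
        gcongr with b
        · exact hφ b
        exact sq_sum_le_card_mul_sum_sq.trans (by gcongr; exact_mod_cast hr b)
    _ = r * ∑ a ∈ s, w a ^ 2 * φ (g a) := by
        simp only [mul_assoc, ← mul_sum, sum_mul_sum_fiberwise]

section Walsh

variable {n : ℕ}

theorem sum_cube_succ {M : Type*} [AddCommMonoid M] (F : (Fin (n + 1) → Bool) → M) :
    ∑ x, F x = ∑ y : Fin n → Bool, (F (Fin.cons false y) + F (Fin.cons true y)) := by
  rw [← (Fin.consEquiv fun _ => Bool).sum_comp, Fintype.sum_prod_type, Fintype.sum_bool,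
    sum_add_distrib, add_comm]
  rfl

theorem signVec_cons (b : Bool) (x : Fin n → Bool) :
    signVec (Fin.cons b x : Fin (n + 1) → Bool) = Fin.cons (if b then 1 else -1) (signVec x) := by
  ext i; cases i using Fin.cases <;> simp [signVec]

def walshChar (σ : Fin n → Bool) (y : Fin n → ℝ) : ℝ := ∏ i, if σ i then y i else 1

def walshPoly (c : (Fin n → Bool) → ℝ) (y : Fin n → ℝ) : ℝ :=
  ∑ σ, c σ * walshChar σ y

theorem walshChar_cons (b : Bool) (σ : Fin n → Bool) (a : ℝ) (y : Fin n → ℝ) :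
    walshChar (Fin.cons b σ) (Fin.cons a y) = (if b then a else 1) * walshChar σ y := by
  simp [walshChar, Fin.prod_univ_succ]

theorem walshPoly_cons (c : (Fin (n + 1) → Bool) → ℝ) (a : ℝ) (y : Fin n → ℝ) :
    walshPoly c (Fin.cons a y) = walshPoly (fun σ => c (Fin.cons false σ)) y
      + a * walshPoly (fun σ => c (Fin.cons true σ)) y := by
  simp only [walshPoly, sum_cube_succ, walshChar_cons, sum_add_distrib, mul_sum]
  congr 1 <;> simp [mul_left_comm]

theorem walshChar_nonneg (σ : Fin n → Bool) {y : Fin n → ℝ} (hy : 0 ≤ y) :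
    0 ≤ walshChar σ y :=
  prod_nonneg fun i _ => by split_ifs; exacts [hy i, zero_le_one]

theorem walshPoly_nonneg {c : (Fin n → Bool) → ℝ} {y : Fin n → ℝ} (hc : 0 ≤ c)
    (hy : 0 ≤ y) :
    0 ≤ walshPoly c y :=
  sum_nonneg fun σ _ => mul_nonneg (hc σ) (walshChar_nonneg σ hy)

-- `walshPoly (c ^ 2) (fun _ => K)` is the weighted energy `∑ σ, K ^ |σ| * c σ ^ 2`.
theorem sum_walshPoly_pow_le {m : ℕ} (hm : m ≠ 0) :
    ∀ {n : ℕ} (c : (Fin n → Bool) → ℝ), ∑ x, walshPoly c (signVec x) ^ (2 * m)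
      ≤ 2 ^ n * walshPoly (c ^ 2) (fun _ => 2 * m - 1) ^ m := by
  set K : ℝ := 2 * m - 1
  have hK : 0 ≤ K := by
    have : (1 : ℝ) ≤ m := by exact_mod_cast Nat.one_le_iff_ne_zero.2 hm
    linarith
  intro n
  induction n with
  | zero => intro c; simp [walshPoly, walshChar, ← pow_mul]
  | succ n ih =>
    intro c
    set c₀ : (Fin n → Bool) → ℝ := fun σ => c (Fin.cons false σ)
    set c₁ : (Fin n → Bool) → ℝ := fun σ => c (Fin.cons true σ)
    set P₀ : (Fin n → Bool) → ℝ := fun y => walshPoly c₀ (signVec y)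
    set P₁ : (Fin n → Bool) → ℝ := fun y => walshPoly c₁ (signVec y)
    have energy_cons : walshPoly (c ^ 2) (fun _ => K)
        = walshPoly (c₀ ^ 2) (fun _ => K) + K * walshPoly (c₁ ^ 2) (fun _ => K) := by
      rw [show (fun _ => K : Fin (n + 1) → ℝ) = Fin.cons K fun _ => K by
        ext i; cases i using Fin.cases <;> rfl, walshPoly_cons]
      rfl
    have h₀ : ∑ y, (P₀ y ^ 2) ^ m ≤ 2 ^ n * walshPoly (c₀ ^ 2) (fun _ => K) ^ m := by
      simpa only [← pow_mul] using ih c₀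
    have h₁ :
        ∑ y, (K * P₁ y ^ 2) ^ m ≤ 2 ^ n * (K * walshPoly (c₁ ^ 2) (fun _ => K)) ^ m := by
      simp only [mul_pow, ← pow_mul, ← mul_sum]
      calc K ^ m * ∑ y, P₁ y ^ (2 * m)
          ≤ K ^ m * (2 ^ n * walshPoly (c₁ ^ 2) (fun _ => K) ^ m) := by gcongr; exact ih c₁
        _ = _ := by ring
    calc ∑ x, walshPoly c (signVec x) ^ (2 * m)
        = ∑ y, ((P₀ y + P₁ y) ^ (2 * m) + (P₀ y - P₁ y) ^ (2 * m)) := by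
          rw [sum_cube_succ]
          refine sum_congr rfl fun y _ => ?_
          simp only [signVec_cons, walshPoly_cons, P₀, P₁, if_true, Bool.false_eq_true,
            if_false]
          ring
      _ ≤ ∑ y, 2 * (P₀ y ^ 2 + K * P₁ y ^ 2) ^ m :=
          sum_le_sum fun y _ => add_pow_two_mul_add_sub_pow_two_mul_le m _ _
      _ ≤ 2 * (2 ^ n *
            (walshPoly (c₀ ^ 2) (fun _ => K) + K * walshPoly (c₁ ^ 2) (fun _ => K)) ^ m) := by
          rw [← mul_sum]
          gcongr
          exact sum_add_pow_le (fun y => sq_nonneg _) (fun y => by positivity) hm (by positivity)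
            (walshPoly_nonneg (fun σ => sq_nonneg _) fun _ => hK)
            (mul_nonneg hK (walshPoly_nonneg (fun σ => sq_nonneg _) fun _ => hK)) h₀ h₁
      _ = 2 ^ (n + 1) * walshPoly (c ^ 2) (fun _ => K) ^ m := by
          rw [energy_cons]; ring

def pairInd (i j : Fin n) : Fin n → Bool := fun l => decide (l ∈ ({i, j} : Finset (Fin n)))

theorem walshChar_pairInd {i j : Fin n} (hij : i ≠ j) (y : Fin n → ℝ) :
    walshChar (pairInd i j) y = y i * y j := by
  simp only [walshChar, pairInd, decide_eq_true_eq]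
  rw [prod_ite_mem, univ_inter, prod_pair hij]

theorem eq_or_eq_swap_of_pairInd_eq {p q : Fin n × Fin n} (h : pairInd q.1 q.2 = pairInd p.1 p.2) :
    q = p ∨ q = p.swap := by
  have : ({q.1, q.2} : Finset (Fin n)) = {p.1, p.2} :=
    ext fun l => decide_eq_decide.1 (congrFun h l)
  rw [← coe_inj, coe_pair, coe_pair] at this
  rcases Set.pair_eq_pair_iff.1 this with ⟨h₁, h₂⟩ | ⟨h₁, h₂⟩
  · exact Or.inl (Prod.ext h₁ h₂)
  · exact Or.inr (Prod.ext h₁ h₂)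

noncomputable def offDiagWalshCoeff (A : Matrix (Fin n) (Fin n) ℝ) (σ : Fin n → Bool) : ℝ :=
  ∑ p ∈ univ.offDiag with pairInd p.1 p.2 = σ, A p.1 p.2

theorem card_fiber_pairInd_le (σ : Fin n → Bool) :
    #{p ∈ (univ : Finset (Fin n)).offDiag | pairInd p.1 p.2 = σ} ≤ 2 := by
  rcases eq_empty_or_nonempty {p ∈ (univ : Finset (Fin n)).offDiag | pairInd p.1 p.2 = σ}
    with h | ⟨p, hp⟩
  · simp [h]
  refine (card_le_card fun q hq => ?_).trans (card_le_two (a := p) (b := p.swap))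
  rw [mem_filter] at hp hq
  simpa using eq_or_eq_swap_of_pairInd_eq (hq.2.trans hp.2.symm)

theorem walshPoly_offDiagWalshCoeff (A : Matrix (Fin n) (Fin n) ℝ) (y : Fin n → ℝ) :
    walshPoly (offDiagWalshCoeff A) y = ∑ p ∈ univ.offDiag, A p.1 p.2 * (y p.1 * y p.2) := by
  simp only [walshPoly, offDiagWalshCoeff, sum_mul_sum_fiberwise]
  exact sum_congr rfl fun p hp => by rw [walshChar_pairInd (mem_offDiag.1 hp).2.2]

theorem dotProduct_mulVec_eq_sum_diag_add_walshPoly (A : Matrix (Fin n) (Fin n) ℝ)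
    (y : Fin n → ℝ) :
    dotProduct y (A.mulVec y) = ∑ i, A i i * y i ^ 2 + walshPoly (offDiagWalshCoeff A) y := by
  have hprod :
      dotProduct y (A.mulVec y) = ∑ p ∈ univ ×ˢ univ, A p.1 p.2 * (y p.1 * y p.2) := by
    simp only [dotProduct, Matrix.mulVec, sum_product, mul_sum]
    exact sum_congr rfl fun i _ => sum_congr rfl fun j _ => by ring
  rw [hprod, walshPoly_offDiagWalshCoeff, ← diag_union_offDiag,
    sum_union (disjoint_diag_offDiag _), sum_diag]
  simp only [sq]

theorem dotProduct_mulVec_signVec (A : Matrix (Fin n) (Fin n) ℝ) (x : Fin n → Bool) :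
    dotProduct (signVec x) (A.mulVec (signVec x))
      = A.trace + walshPoly (offDiagWalshCoeff A) (signVec x) := by
  rw [dotProduct_mulVec_eq_sum_diag_add_walshPoly, Matrix.trace]
  congr 1
  exact sum_congr rfl fun i _ => by simp [signVec, apply_ite (· ^ 2)]

theorem walshPoly_offDiagWalshCoeff_sq_le (A : Matrix (Fin n) (Fin n) ℝ) {K : ℝ}
    (hK : 0 ≤ K) :
    walshPoly (offDiagWalshCoeff A ^ 2) (fun _ => K) ≤ 2 * K ^ 2 * ∑ i, ∑ j, A i j ^ 2 := by
  calc walshPoly (offDiagWalshCoeff A ^ 2) (fun _ => K)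
      ≤ 2 * ∑ p ∈ univ.offDiag, A p.1 p.2 ^ 2 * walshChar (pairInd p.1 p.2) (fun _ => K) := by
        exact_mod_cast sum_sq_sum_fiberwise_mul_le card_fiber_pairInd_le _
          fun σ => walshChar_nonneg σ fun _ => hK
    _ = 2 * K ^ 2 * ∑ p ∈ univ.offDiag, A p.1 p.2 ^ 2 := by
        simp only [mul_assoc, mul_sum]
        refine sum_congr rfl fun p hp => ?_
        rw [walshChar_pairInd (mem_offDiag.1 hp).2.2]
        ring
    _ ≤ 2 * K ^ 2 * ∑ p ∈ univ ×ˢ univ, A p.1 p.2 ^ 2 := by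
        gcongr
        exact diag_union_offDiag (univ : Finset (Fin n)) ▸ subset_union_right
    _ = 2 * K ^ 2 * ∑ i, ∑ j, A i j ^ 2 := by rw [sum_product]

theorem sum_walshPoly_offDiagWalshCoeff_pow_le (A : Matrix (Fin n) (Fin n) ℝ) {k : ℕ}
    (hk : k ≠ 0) :
    ∑ x, walshPoly (offDiagWalshCoeff A) (signVec x) ^ (2 * k)
      ≤ Fintype.card (Fin n → Bool) * (3 * k * frobNorm A) ^ (2 * k) := by
  have hk1 : (1 : ℝ) ≤ k := by exact_mod_cast Nat.one_le_iff_ne_zero.2 hk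
  have hK : (0 : ℝ) ≤ 2 * k - 1 := by linarith
  have henergy :
      walshPoly (offDiagWalshCoeff A ^ 2) (fun _ => 2 * k - 1) ≤ (3 * k * frobNorm A) ^ 2 := by
    calc _ ≤ 2 * (2 * k - 1) ^ 2 * ∑ i, ∑ j, A i j ^ 2 :=
          walshPoly_offDiagWalshCoeff_sq_le A hK
      _ ≤ 9 * k ^ 2 * ∑ i, ∑ j, A i j ^ 2 := by gcongr ?_ * _; nlinarith
      _ = (3 * k * frobNorm A) ^ 2 := by
          rw [mul_pow, frobNorm, Real.sq_sqrt (by positivity)]; ring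
  rw [Fintype.card_fun, Fintype.card_bool, Fintype.card_fin, pow_mul]
  push_cast
  refine (sum_walshPoly_pow_le hk _).trans ?_
  gcongr
  exact walshPoly_nonneg (fun σ => sq_nonneg _) fun _ => hK

end Walsh

/-- A moment bound for quadratic forms over the hypercube (Lemma `boundmoment`). -/
theorem moment_bound_quadratic_forms :
    ∃ C : ℝ, 0 < C ∧
      ∀ (n : ℕ) (A : Matrix (Fin n) (Fin n) ℝ), A.IsSymm →
      ∀ k : ℕ, 2 ≤ k →
        expUnif n (fun x => |dotProduct x (A.mulVec x)| ^ k)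
          ≤ C ^ k * max (frobNorm A * k) |A.trace| ^ k := by
  refine ⟨4, by norm_num, fun n A _ k hk => ?_⟩
  have hk0 : k ≠ 0 := by omega
  have hF : 0 ≤ frobNorm A := Real.sqrt_nonneg _
  have hmoment := sum_abs_add_pow_le A.trace hk0 (by positivity)
    (sum_walshPoly_offDiagWalshCoeff_pow_le A hk0)
  have hcard : (Fintype.card (Fin n → Bool) : ℝ) = 2 ^ n := by simp
  rw [expUnif, div_le_iff₀ (by positivity), ← hcard]
  calc ∑ x, |dotProduct (signVec x) (A.mulVec (signVec x))| ^ k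
      ≤ Fintype.card (Fin n → Bool) * (|A.trace| + 3 * k * frobNorm A) ^ k := by
        simpa only [dotProduct_mulVec_signVec] using hmoment
    _ ≤ Fintype.card (Fin n → Bool) * (4 * max (frobNorm A * k) |A.trace|) ^ k := by
        gcongr
        linarith [le_max_left (frobNorm A * k) |A.trace|, le_max_right (frobNorm A * k) |A.trace|]
    _ = 4 ^ k * max (frobNorm A * k) |A.trace| ^ k * Fintype.card (Fin n → Bool) := by ring
end
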